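/- Let 𝒯 be a set of k rooted phylogenetic trees and let 𝒜 be a cut-subforest of 𝒯. If (𝒜_L, 𝒜_R) is a bipartite of 𝒜 then mcsp(𝒜) ≥ mcsp(𝒜_L) + mcsp(𝒜_R). -/

import Mathlib

/-- Rooted, unordered, leaf-labelled trees:
a tree is a single labelled leaf, or an (internal) root node with a list of subtrees
attached to it.  Being unordered, such trees are considered up to the
isomorphism `PTree.Iso` below.  The empty tree is represented by `none` in
`Option (PTree α)`. -/
inductive PTree (α : Type) : Type where
  | leaf : α → PTree α
  | node : List (PTree α) → PTree α

namespace PTree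

variable {α : Type} [DecidableEq α]

theorem sizeOf_lt_of_mem {α : Type} {c : PTree α} {cs : List (PTree α)}
    (h : c ∈ cs) : sizeOf c < sizeOf (PTree.node cs) := by
  have := List.sizeOf_lt_of_mem h
  simp only [node.sizeOf_spec]; omega

/-- `Subtree s t` : `s` is the complete subtree rooted at some node of `t`. -/
inductive Subtree : PTree α → PTree α → Prop where
  | refl (t : PTree α) : Subtree t t
  | child {s c : PTree α} {cs : List (PTree α)} :
      c ∈ cs → Subtree s c → Subtree s (node cs)

/-- The list of leaf labels of a tree. -/
def labelList : PTree α → List α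
  | leaf a => [a]
  | node cs => cs.attach.flatMap (fun c => labelList c.1)
decreasing_by exact sizeOf_lt_of_mem c.2

/-- The set `L(T)` of leaf labels of a tree. -/
def labels (t : PTree α) : Finset α := t.labelList.toFinset

/-- The size of a tree: the number of its leaves. -/
def treeSize (t : PTree α) : ℕ := t.labels.card

/-- The label set of a possibly empty tree. -/
def olabels : Option (PTree α) → Finset α
  | none => ∅
  | some t => t.labels

/-- Connecting a list of trees by a common root.  The empty list yields the
empty tree and a single tree yields that tree itself (no degree-two node is
created). -/
def connect : List (PTree α) → Option (PTree α)
  | [] => none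
  | [t] => some t
  | ts => some (node ts)

/-- The restriction `T|S` of `T` to a label set `S`: all leaves with labels
outside `S` are removed and all internal nodes of degree two are suppressed. -/
def restrict (S : Finset α) : PTree α → Option (PTree α)
  | leaf a => if a ∈ S then some (leaf a) else none
  | node cs => connect ((cs.attach.map (fun c => restrict S c.1)).reduceOption)
decreasing_by exact sizeOf_lt_of_mem c.2

/-- Restriction of a possibly empty tree. -/
def orestrict (S : Finset α) (t : Option (PTree α)) : Option (PTree α) :=
  t.bind (restrict S)

/-- Isomorphism (equality) of unordered leaf-labelled trees: equality of trees
up to reordering of the children of each node. -/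
inductive Iso : PTree α → PTree α → Prop where
  | leaf (a : α) : Iso (leaf a) (leaf a)
  | node {cs ds ds' : List (PTree α)} :
      List.Forall₂ Iso cs ds' → ds'.Perm ds → Iso (node cs) (node ds)

/-- One edge contraction: the edge between a node and one of its (internal)
children is contracted, merging the child into the parent. -/
inductive Contract : PTree α → PTree α → Prop where
  | top (l r ds : List (PTree α)) :
      Contract (node (l ++ node ds :: r)) (node (l ++ ds ++ r))
  | child {c c' : PTree α} (l r : List (PTree α)) :
      Contract c c' → Contract (node (l ++ c :: r)) (node (l ++ c' :: r))

/-- `T` refines `T'` (written `T ⊵ T'`): `T'` can be obtained (as an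
unordered tree) by contracting some edges of `T`. -/
def Refines (t t' : PTree α) : Prop :=
  ∃ u, Relation.ReflTransGen Contract t u ∧ Iso u t'

/-- Refinement of possibly empty trees. -/
def ORefines : Option (PTree α) → Option (PTree α) → Prop
  | none, none => True
  | some a, some b => Refines a b
  | _, _ => False

/-- Isomorphism (equality) of possibly empty unordered trees. -/
def OIso : Option (PTree α) → Option (PTree α) → Prop
  | none, none => True
  | some a, some b => Iso a b
  | _, _ => False

/-- A possibly empty tree is (empty or) a complete subtree of `T`. -/
def OSubtree (T : PTree α) : Option (PTree α) → Prop
  | none => True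
  | some t => Subtree t T

/-- No internal node of degree two (after the usual suppression convention):
every internal node of the rooted tree has at least two children. -/
def NoUnaryNodes (T : PTree α) : Prop :=
  ∀ cs : List (PTree α), Subtree (node cs) T → 2 ≤ cs.length

/-- Every node of the rooted tree has degree at most `D` (the degree of the
root is its number of children; the degree of any other internal node is its
number of children plus one). -/
def DegLE (D : ℕ) (T : PTree α) : Prop :=
  (∀ cs : List (PTree α), T = node cs → cs.length ≤ D) ∧
  (∀ cs : List (PTree α), Subtree (node cs) T → node cs ≠ T → cs.length + 1 ≤ D)

/-- A rooted tree is binary if every internal node has exactly two children. -/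
def Binary (T : PTree α) : Prop :=
  ∀ cs : List (PTree α), Subtree (node cs) T → cs.length = 2

/-- A cut-subtree of `T`: the empty tree, or the tree obtained by selecting
some (at least one) of the subtrees attached to an internal node of `T` and
connecting those subtrees by a common root. -/
def IsCutSubtree (T : PTree α) (a : Option (PTree α)) : Prop :=
  a = none ∨ ∃ cs sel : List (PTree α),
    Subtree (node cs) T ∧ sel.Sublist cs ∧ sel ≠ [] ∧ a = connect sel

variable {k : ℕ}

/-- A cut-subforest of `𝒯`: each component is a cut-subtree of the
corresponding tree, and at least one component is nonempty. -/
def IsCutSubforest (𝒯 : Fin k → PTree α) (A : Fin k → Option (PTree α)) : Prop :=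
  (∀ i, IsCutSubtree (𝒯 i) (A i)) ∧ ∃ i, A i ≠ none

/-- A sub-forest of `𝒯`: each component is the empty tree or a complete
subtree rooted at some node of the corresponding tree, and at least one
component is nonempty. -/
def IsSubForest (𝒯 : Fin k → PTree α) (A : Fin k → Option (PTree α)) : Prop :=
  (∀ i, OSubtree (𝒯 i) (A i)) ∧ ∃ i, A i ≠ none

/-- The set of all labels occurring in the trees of `𝒯`. -/
def allLabels (𝒯 : Fin k → PTree α) : Finset α :=
  Finset.univ.biUnion fun i => (𝒯 i).labels

/-- A (cut-sub)forest is terminal if each component is the empty tree or a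
single leaf of the corresponding tree. -/
def IsTerminal (𝒯 : Fin k → PTree α) (A : Fin k → Option (PTree α)) : Prop :=
  ∀ i, A i = none ∨ ∃ a : α, A i = some (leaf a) ∧ Subtree (leaf a) (𝒯 i)

/-- `Λ(𝒜) = { l ∈ ⋃_j L(𝒜⁽ʲ⁾) ∣ ∀ i, l ∉ L(𝒯⁽ⁱ⁾) − L(𝒜⁽ⁱ⁾) }`. -/
def lambdaSet (𝒯 : Fin k → PTree α) (A : Fin k → Option (PTree α)) : Finset α :=
  (Finset.univ.biUnion fun j => olabels (A j)).filter
    fun l => ∀ i, l ∉ (𝒯 i).labels \ olabels (A i)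

/-- `Y` is a compatible supertree of the forest `A`:
`Y|L(A⁽ⁱ⁾) ⊵ A⁽ⁱ⁾|L(Y)` for every `i`. -/
def IsCompatibleSupertree (A : Fin k → Option (PTree α)) (Y : PTree α) : Prop :=
  ∀ i, ORefines (restrict (olabels (A i)) Y) (orestrict Y.labels (A i))

/-- `X` is an agreement supertree of the forest `A`:
`X|L(A⁽ⁱ⁾) = A⁽ⁱ⁾|L(X)` (as unordered trees) for every `i`. -/
def IsAgreementSupertree (A : Fin k → Option (PTree α)) (X : PTree α) : Prop :=
  ∀ i, OIso (restrict (olabels (A i)) X) (orestrict X.labels (A i))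

/-- An embedded supertree of a cut-subforest `A` of `𝒯`: a distinctly
leaf-labelled compatible supertree `Y` of `A`, with leaves labelled by labels
of `𝒯`, such that `L(Y) ∩ L(𝒯⁽ⁱ⁾) ⊆ L(A⁽ⁱ⁾)` for all `i`. -/
def IsEmbeddedSupertree (𝒯 : Fin k → PTree α) (A : Fin k → Option (PTree α))
    (Y : PTree α) : Prop :=
  Y.labelList.Nodup ∧ Y.labels ⊆ allLabels 𝒯 ∧
  IsCompatibleSupertree A Y ∧
  ∀ i, Y.labels ∩ (𝒯 i).labels ⊆ olabels (A i)

/-- An enclosed supertree of a sub-forest `A` of `𝒯`: a distinctly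
leaf-labelled agreement supertree `X` of `A`, with leaves labelled by labels
of `𝒯`, such that `L(X) ∩ L(𝒯⁽ⁱ⁾) ⊆ L(A⁽ⁱ⁾)` for all `i`. -/
def IsEnclosedSupertree (𝒯 : Fin k → PTree α) (A : Fin k → Option (PTree α))
    (X : PTree α) : Prop :=
  X.labelList.Nodup ∧ X.labels ⊆ allLabels 𝒯 ∧
  IsAgreementSupertree A X ∧
  ∀ i, X.labels ∩ (𝒯 i).labels ⊆ olabels (A i)

/-- `mcsp 𝒯 A` : the maximum size of an embedded supertree of `A`. -/
noncomputable def mcsp (𝒯 : Fin k → PTree α) (A : Fin k → Option (PTree α)) : ℕ :=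
  sSup {m : ℕ | ∃ Y : PTree α, IsEmbeddedSupertree 𝒯 A Y ∧ m = Y.treeSize}

/-- `masp 𝒯 A` : the maximum size of an enclosed supertree of `A`. -/
noncomputable def masp (𝒯 : Fin k → PTree α) (A : Fin k → Option (PTree α)) : ℕ :=
  sSup {m : ℕ | ∃ X : PTree α, IsEnclosedSupertree 𝒯 A X ∧ m = X.treeSize}

end PTree

/-- `ListSplit s l r` : the list `s` is partitioned into the two
(complementary) sublists `l` and `r`. -/
inductive ListSplit {β : Type} : List β → List β → List β → Prop where
  | nil : ListSplit [] [] []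
  | left {s l r : List β} (x : β) : ListSplit s l r → ListSplit (x :: s) (x :: l) r
  | right {s l r : List β} (x : β) : ListSplit s l r → ListSplit (x :: s) l (x :: r)

namespace PTree

variable {α : Type} [DecidableEq α] {k : ℕ}

/-- `(AL, AR)` is a bipartite of the forest `A`: for every `i` the set of
subtrees attached to the root of `A⁽ⁱ⁾` is partitioned into two sets, each of
which is connected by a common root to form `AL⁽ⁱ⁾` resp. `AR⁽ⁱ⁾` (an empty
set of subtrees yielding the empty tree). -/
def IsBipartite (A AL AR : Fin k → Option (PTree α)) : Prop :=
  ∀ i, ∃ s sL sR : List (PTree α),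
    A i = connect s ∧ ListSplit s sL sR ∧ AL i = connect sL ∧ AR i = connect sR

/-- Condition, at one component, for `(b 1, …, b d)` to decompose `a`:
either exactly one `b j` is isomorphic to `a` and the others are empty, or at
least two of the `b j` are nonempty and the nonempty ones are isomorphic to
pairwise distinct subtrees attached to the root of `a`. -/
def DecompAt {d : ℕ} (a : Option (PTree α)) (b : Fin d → Option (PTree α)) : Prop :=
  (∃ j, OIso (b j) a ∧ ∀ j', j' ≠ j → b j' = none) ∨
  (∃ cs : List (PTree α), a = some (node cs) ∧
    2 ≤ (Finset.univ.filter fun j => (b j).isSome).card ∧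
    ∃ idx : Fin d → Option (Fin cs.length),
      (∀ j, b j = none ↔ idx j = none) ∧
      (∀ j t m, b j = some t → idx j = some m → Iso t (cs.get m)) ∧
      (∀ j j' m, idx j = some m → idx j' = some m → j = j'))

/-- `(B 1, …, B d)` is a decomposition of the forest `A` (each `B j` being a
possibly empty sub-forest of `𝒯`). -/
def IsDecomposition (𝒯 : Fin k → PTree α) (A : Fin k → Option (PTree α))
    (d : ℕ) (B : Fin d → Fin k → Option (PTree α)) : Prop :=
  2 ≤ d ∧ (∀ j i, OSubtree (𝒯 i) (B j i)) ∧ ∀ i, DecompAt (A i) fun j => B j i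

/-- The root of the (nonempty) cut-subtree `a` is an internal node of `T`,
i.e. `a` is the complete subtree of `T` rooted at an internal node of `T`. -/
def InternalRooted (T : PTree α) : Option (PTree α) → Prop
  | none => False
  | some t => (∃ cs : List (PTree α), t = node cs) ∧ Subtree t T

/-- One rerooting step: the root is moved to an adjacent internal node. -/
inductive Reroot1 : PTree α → PTree α → Prop where
  | step (l r ds : List (PTree α)) :
      Reroot1 (node (l ++ node ds :: r)) (node (ds ++ [node (l ++ r)]))

/-- `F` is a rooted variant of the unrooted tree (represented by) `T`:
`F` is obtained by rooting `T` at some internal node. -/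
def RootedVariant (T F : PTree α) : Prop := Relation.ReflTransGen Reroot1 T F

/-- A maximal subtree of the unrooted tree (represented by) `T`: a rooted tree
obtained by first rooting `T` at some internal node and then removing at most
one nontrivial subtree attached to that node. -/
def IsMaximalSubtree (T A : PTree α) : Prop :=
  ∃ cs : List (PTree α), RootedVariant T (node cs) ∧
    (A = node cs ∨ ∃ l r ds : List (PTree α), cs = l ++ node ds :: r ∧ A = node (l ++ r))

/-- `T` (a rooted tree, rooted at an internal node) represents an unrooted
tree without vertices of degree two: the root has at least three neighbours
and every other internal vertex has at least three neighbours as well. -/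
def IsUnrootedRep (T : PTree α) : Prop :=
  (∃ cs : List (PTree α), T = node cs ∧ 3 ≤ cs.length) ∧
  ∀ cs : List (PTree α), Subtree (node cs) T → node cs ≠ T → 2 ≤ cs.length

end PTree

/-!
Take embedded supertrees `YL` of `𝒜_L` and `YR` of `𝒜_R` of maximum size (the maximum is
attained: sizes are bounded by the number of labels, and the leafless tree `node []` is an
embedded supertree of every forest) and join them by a new root.

Because the input trees are distinctly labelled, the label sets of `𝒜_L⁽ⁱ⁾` and `𝒜_R⁽ⁱ⁾` are
disjoint, and the condition `L(Y) ∩ L(𝒯⁽ⁱ⁾) ⊆ L(𝒜⁽ⁱ⁾)` lets `YL` meet only the subtrees of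
`𝒜⁽ⁱ⁾` that went to `𝒜_L⁽ⁱ⁾`, and `YR` only those that went to `𝒜_R⁽ⁱ⁾`. Hence `YL` and `YR`
have disjoint leaf sets, and for the joined tree `Y` every `Y|L(𝒜⁽ⁱ⁾)` is the join of
`YL|L(𝒜_L⁽ⁱ⁾)` and `YR|L(𝒜_R⁽ⁱ⁾)`, while `𝒜⁽ⁱ⁾|L(Y)` is, up to the order of children, the
join of `𝒜_L⁽ⁱ⁾|L(YL)` and `𝒜_R⁽ⁱ⁾|L(YR)`. Joining two refinements by a common root gives a
refinement, so the joined tree is an embedded supertree of `𝒜` of size `|YL| + |YR|`.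
-/

theorem ListSplit.perm {β : Type} {s l r : List β} (h : ListSplit s l r) : s.Perm (l ++ r) := by
  induction h with
  | nil => exact .refl _
  | left x _ ih => exact ih.cons x
  | right x _ ih => exact (ih.cons x).trans List.perm_middle.symm

namespace PTree

section

variable {α : Type}

theorem connect_eq_none_iff {l : List (PTree α)} : connect l = none ↔ l = [] := by
  match l with
  | [] | [_] | _ :: _ :: _ => simp [connect]

theorem connect_of_two_le_length {l : List (PTree α)} (h : 2 ≤ l.length) :
    connect l = some (node l) := by
  match l with
  | [] | [_] => simp at h
  | _ :: _ :: _ => rfl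

theorem connect_reduceOption_singleton (u : Option (PTree α)) : connect [u].reduceOption = u := by
  cases u <;> rfl

theorem labelList_node (cs : List (PTree α)) : labelList (node cs) = cs.flatMap labelList := by
  rw [labelList]
  conv_rhs => rw [← List.attach_map_subtype_val cs]
  rw [List.flatMap_map]

theorem labelList_of_connect_eq_some {l : List (PTree α)} {t : PTree α}
    (h : connect l = some t) : t.labelList = l.flatMap labelList := by
  match l, h with
  | [_], h => cases Option.some.inj h; simp
  | _ :: _ :: _, h => cases Option.some.inj h; rw [labelList_node]

theorem labelList_node_pair (YL YR : PTree α) :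
    labelList (node [YL, YR]) = YL.labelList ++ YR.labelList := by
  simp [labelList_node]

theorem labelList_sublist_of_subtree {s t : PTree α} (h : Subtree s t) :
    s.labelList.Sublist t.labelList := by
  induction h with
  | refl => exact .refl _
  | child hmem _ ih =>
    rw [labelList_node]
    exact ih.trans <| by
      simpa [List.flatMap] using List.sublist_flatten_of_mem (List.mem_map_of_mem hmem)

theorem IsCutSubtree.labelList_sublist {T t : PTree α} {a : Option (PTree α)}
    (h : IsCutSubtree T a) (ht : a = some t) : t.labelList.Sublist T.labelList := by
  obtain rfl | ⟨cs, sel, hsub, hsel, -, rfl⟩ := h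
  · cases ht
  · rw [labelList_of_connect_eq_some ht]
    exact (hsel.flatMap labelList).trans (labelList_node cs ▸ labelList_sublist_of_subtree hsub)

theorem IsCutSubtree.nodup_flatMap_labelList {T : PTree α} {s : List (PTree α)}
    (h : IsCutSubtree T (connect s)) (hT : T.labelList.Nodup) : (s.flatMap labelList).Nodup := by
  cases hs : connect s with
  | none => simp [connect_eq_none_iff.mp hs]
  | some t => exact labelList_of_connect_eq_some hs ▸ (h.labelList_sublist hs).nodup hT

theorem iso_node_of_perm {u : PTree α} {Q P : List (PTree α)} (h : Iso u (node Q))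
    (hp : Q.Perm P) : Iso u (node P) := by
  cases h with
  | node hf hperm => exact .node hf (hperm.trans hp)

theorem iso_node_append {es es' Q Q' : List (PTree α)} (h : Iso (node es) (node Q))
    (h' : Iso (node es') (node Q')) : Iso (node (es ++ es')) (node (Q ++ Q')) := by
  cases h with
  | node hf hp =>
    cases h' with
    | node hf' hp' => exact .node (List.rel_append hf hf') (hp.append hp')

theorem contract_reflTransGen_child {c c' : PTree α} (l r : List (PTree α))
    (h : Relation.ReflTransGen Contract c c') :
    Relation.ReflTransGen Contract (node (l ++ c :: r)) (node (l ++ c' :: r)) :=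
  h.lift (fun x => node (l ++ x :: r)) fun _ _ => Contract.child l r

theorem exists_contract_of_iso_connect {w z : PTree α} {Q : List (PTree α)}
    (l r : List (PTree α)) (hQ : connect Q = some z) (hiso : Iso w z) :
    ∃ es : List (PTree α),
      Relation.ReflTransGen Contract (node (l ++ w :: r)) (node (l ++ es ++ r)) ∧
      Iso (node es) (node Q) := by
  match Q, hQ with
  | [q], hQ =>
    cases Option.some.inj hQ
    exact ⟨[w], by simpa using Relation.ReflTransGen.refl,
      .node (.cons hiso .nil) (.refl _)⟩
  | _ :: _ :: _, hQ =>
    cases Option.some.inj hQ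
    cases hiso with
    | @node cs _ _ hf hperm =>
      exact ⟨cs, .single (Contract.top l r cs), .node hf hperm⟩

theorem refines_node_pair {yL yR zL zR : PTree α} {PL PR P : List (PTree α)}
    (hL : Refines yL zL) (hR : Refines yR zR)
    (hzL : connect PL = some zL) (hzR : connect PR = some zR) (hp : (PL ++ PR).Perm P) :
    Refines (node [yL, yR]) (node P) := by
  obtain ⟨wL, hyL, hwL⟩ := hL
  obtain ⟨wR, hyR, hwR⟩ := hR
  have hy : Relation.ReflTransGen Contract (node [yL, yR]) (node [wL, wR]) :=
    (contract_reflTransGen_child [] [yR] hyL).trans (contract_reflTransGen_child [wL] [] hyR)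
  obtain ⟨esL, hesL, hisoL⟩ := exists_contract_of_iso_connect [] [wR] hzL hwL
  obtain ⟨esR, hesR, hisoR⟩ := exists_contract_of_iso_connect esL [] hzR hwR
  simp only [List.nil_append, List.append_nil] at hesL hesR
  exact ⟨node (esL ++ esR), hy.trans (hesL.trans hesR),
    iso_node_of_perm (iso_node_append hisoL hisoR) hp⟩

theorem ORefines.eq_none {b : Option (PTree α)} (h : ORefines none b) : b = none := by
  cases b
  exacts [rfl, h.elim]

theorem ORefines.exists_refines {y : PTree α} {b : Option (PTree α)}
    (h : ORefines (some y) b) : ∃ z, b = some z ∧ Refines y z := by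
  cases b
  exacts [h.elim, ⟨_, rfl, h⟩]

theorem ORefines.connect_of_perm {u : Option (PTree α)} {Q P : List (PTree α)}
    (h : ORefines u (connect Q)) (hp : Q.Perm P) : ORefines u (connect P) := by
  match u, Q, h with
  | none, [], h => rwa [hp.symm.eq_nil]
  | none, [_], h | none, _ :: _ :: _, h => exact h.elim
  | some _, [q], h => rwa [List.perm_singleton.mp hp.symm]
  | some _, _ :: _ :: _, ⟨w, hw, hiso⟩ =>
    rw [connect_of_two_le_length (hp.length_eq ▸ by simp)]
    exact ⟨w, hw, iso_node_of_perm hiso hp⟩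

/-- The refinement of the whole is witnessed by joining the two refining trees by a new root
and contracting the (at most two) edges below it. -/
theorem ORefines.connect_pair {uL uR : Option (PTree α)} {PL PR P : List (PTree α)}
    (hL : ORefines uL (connect PL)) (hR : ORefines uR (connect PR))
    (hp : P.Perm (PL ++ PR)) :
    ORefines (connect [uL, uR].reduceOption) (connect P) := by
  match uL, uR with
  | none, uR =>
    obtain rfl := connect_eq_none_iff.mp hL.eq_none
    simpa [List.reduceOption_cons_of_none, connect_reduceOption_singleton]
      using hR.connect_of_perm hp.symm
  | some yL, none =>
    obtain rfl := connect_eq_none_iff.mp hR.eq_none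
    exact hL.connect_of_perm (by simpa using hp.symm)
  | some yL, some yR =>
    obtain ⟨zL, hzL, hyzL⟩ := hL.exists_refines
    obtain ⟨zR, hzR, hyzR⟩ := hR.exists_refines
    have hPL : PL ≠ [] := by rintro rfl; simp [connect] at hzL
    have hPR : PR ≠ [] := by rintro rfl; simp [connect] at hzR
    have hP : 2 ≤ P.length := by
      rw [hp.length_eq, List.length_append]
      have := List.length_pos_iff.mpr hPL
      have := List.length_pos_iff.mpr hPR
      omega
    rw [connect_of_two_le_length hP]
    exact refines_node_pair hyzL hyzR hzL hzR hp.symm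

end

section

variable {α : Type} [DecidableEq α]

theorem mem_labels_node {x : α} {cs : List (PTree α)} :
    x ∈ labels (node cs) ↔ ∃ c ∈ cs, x ∈ labels c := by
  simp [labels, labelList_node]

theorem labels_subset_of_mem {c : PTree α} {cs : List (PTree α)} (h : c ∈ cs) :
    labels c ⊆ labels (node cs) := fun _ hx => mem_labels_node.mpr ⟨c, h, hx⟩

theorem olabels_connect (l : List (PTree α)) :
    olabels (connect l) = (l.flatMap labelList).toFinset := by
  cases h : connect l with
  | none => simp [olabels, connect_eq_none_iff.mp h]
  | some t => simp [olabels, labels, labelList_of_connect_eq_some h]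

theorem mem_olabels_connect {x : α} {l : List (PTree α)} :
    x ∈ olabels (connect l) ↔ ∃ c ∈ l, x ∈ labels c := by
  simp [olabels_connect, labels]

theorem olabels_connect_subset_of_perm_append {s sL sR : List (PTree α)}
    (hs : s.Perm (sL ++ sR)) :
    olabels (connect sL) ⊆ olabels (connect s) ∧ olabels (connect sR) ⊆ olabels (connect s) := by
  constructor <;>
  · intro x hx
    obtain ⟨c, hc, hxc⟩ := mem_olabels_connect.mp hx
    exact mem_olabels_connect.mpr ⟨c, hs.mem_iff.mpr (by simp [hc]), hxc⟩

theorem labels_node_pair (YL YR : PTree α) : labels (node [YL, YR]) = YL.labels ∪ YR.labels := by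
  ext x; simp [mem_labels_node]

theorem restrict_node (S : Finset α) (cs : List (PTree α)) :
    restrict S (node cs) = connect (cs.map (restrict S)).reduceOption := by
  rw [restrict]
  congr 2
  conv_rhs => rw [← List.attach_map_subtype_val cs]
  rw [List.map_map]
  rfl

theorem orestrict_connect (S : Finset α) (s : List (PTree α)) :
    orestrict S (connect s) = connect (s.map (restrict S)).reduceOption := by
  match s with
  | [] => rfl
  | [t] => exact (connect_reduceOption_singleton (restrict S t)).symm
  | _ :: _ :: _ => exact restrict_node S _

theorem restrict_empty : ∀ t : PTree α, restrict ∅ t = none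
  | leaf a => by simp [restrict]
  | node cs => by
    rw [restrict_node, connect_eq_none_iff, List.reduceOption, List.filterMap_eq_nil_iff]
    intro x hx
    obtain ⟨c, hc, rfl⟩ := List.mem_map.mp hx
    exact restrict_empty c
termination_by t => sizeOf t
decreasing_by exact sizeOf_lt_of_mem hc

theorem restrict_congr : ∀ (t : PTree α) {S S' : Finset α},
    S ∩ t.labels = S' ∩ t.labels → restrict S t = restrict S' t
  | leaf a, S, S', h => by
    have ha : a ∈ S ↔ a ∈ S' := by simpa [labels, labelList] using Finset.ext_iff.mp h a
    simp only [restrict, ha]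
  | node cs, S, S', h => by
    rw [restrict_node, restrict_node, List.map_congr_left fun c hc => restrict_congr c ?_]
    ext x
    have := Finset.ext_iff.mp h x
    have := @labels_subset_of_mem _ _ _ _ hc x
    simp only [Finset.mem_inter] at *
    tauto
termination_by t => sizeOf t
decreasing_by exact sizeOf_lt_of_mem hc

theorem restrict_eq_of_inter_subset {t : PTree α} {S S' : Finset α} (hS' : S' ⊆ S)
    (h : S ∩ t.labels ⊆ S') : restrict S t = restrict S' t := by
  refine restrict_congr t (Finset.Subset.antisymm ?_ (Finset.inter_subset_inter_right hS'))
  exact Finset.subset_inter h Finset.inter_subset_right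

end

section

variable {α : Type} [DecidableEq α] {k : ℕ}

theorem IsCutSubtree.olabels_subset {T : PTree α} {a : Option (PTree α)}
    (h : IsCutSubtree T a) : olabels a ⊆ T.labels := by
  cases a with
  | none => exact Finset.empty_subset _
  | some t => exact fun x hx =>
    List.mem_toFinset.mpr ((h.labelList_sublist rfl).subset (List.mem_toFinset.mp hx))

theorem disjoint_olabels_connect_of_nodup {s sL sR : List (PTree α)}
    (hnd : (s.flatMap labelList).Nodup) (hs : s.Perm (sL ++ sR)) :
    Disjoint (olabels (connect sL)) (olabels (connect sR)) := by
  have hnd' := (hs.flatMap_right labelList).nodup_iff.mp hnd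
  rw [List.flatMap_append] at hnd'
  rw [olabels_connect, olabels_connect, List.disjoint_toFinset_iff_disjoint]
  exact List.disjoint_of_nodup_append hnd'

/-- `M` plays the role of the label set `L(𝒯⁽ⁱ⁾)` of the input tree. -/
theorem orefines_restrict_node_pair {M : Finset α} {a aL aR : Option (PTree α)}
    {s sL sR : List (PTree α)} {YL YR : PTree α}
    (ha : a = connect s) (haL : aL = connect sL) (haR : aR = connect sR)
    (hs : s.Perm (sL ++ sR)) (haM : olabels a ⊆ M) (hdisj : Disjoint (olabels aL) (olabels aR))
    (hYL : YL.labels ∩ M ⊆ olabels aL) (hYR : YR.labels ∩ M ⊆ olabels aR)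
    (hcompatL : ORefines (restrict (olabels aL) YL) (orestrict YL.labels aL))
    (hcompatR : ORefines (restrict (olabels aR) YR) (orestrict YR.labels aR)) :
    ORefines (restrict (olabels a) (node [YL, YR])) (orestrict (node [YL, YR]).labels a) := by
  subst ha haL haR
  obtain ⟨hsL, hsR⟩ := olabels_connect_subset_of_perm_append hs
  have hsideL : restrict (olabels (connect s)) YL = restrict (olabels (connect sL)) YL :=
    restrict_eq_of_inter_subset hsL fun x hx => by
      rw [Finset.mem_inter] at hx
      exact hYL (Finset.mem_inter.mpr ⟨hx.2, haM hx.1⟩)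
  have hsideR : restrict (olabels (connect s)) YR = restrict (olabels (connect sR)) YR :=
    restrict_eq_of_inter_subset hsR fun x hx => by
      rw [Finset.mem_inter] at hx
      exact hYR (Finset.mem_inter.mpr ⟨hx.2, haM hx.1⟩)
  -- a child on one side of the split shares no label with the supertree of the other side
  have hchild {c Y Y' : PTree α} {P Q : Finset α} (hcP : c.labels ⊆ P) (hPM : P ⊆ M)
      (hY' : Y'.labels ∩ M ⊆ Q) (hPQ : Disjoint P Q) :
      restrict (Y.labels ∪ Y'.labels) c = restrict Y.labels c := by
    refine restrict_eq_of_inter_subset Finset.subset_union_left fun x hx => ?_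
    simp only [Finset.mem_inter, Finset.mem_union] at hx
    refine hx.1.resolve_right fun hxY' => Finset.disjoint_left.mp hPQ (hcP hx.2) ?_
    exact hY' (Finset.mem_inter.mpr ⟨hxY', hPM (hcP hx.2)⟩)
  have hchildL : ∀ c ∈ sL, restrict (YL.labels ∪ YR.labels) c = restrict YL.labels c :=
    fun c hc => hchild (fun x hx => mem_olabels_connect.mpr ⟨c, hc, hx⟩) (hsL.trans haM) hYR hdisj
  have hchildR : ∀ c ∈ sR, restrict (YL.labels ∪ YR.labels) c = restrict YR.labels c := by
    intro c hc
    rw [Finset.union_comm]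
    exact hchild (fun x hx => mem_olabels_connect.mpr ⟨c, hc, hx⟩)
      (hsR.trans haM) hYL hdisj.symm
  rw [restrict_node, orestrict_connect, labels_node_pair]
  simp only [List.map_cons, List.map_nil, hsideL, hsideR]
  rw [orestrict_connect] at hcompatL hcompatR
  refine hcompatL.connect_pair hcompatR ?_
  have hperm := (hs.map (restrict (YL.labels ∪ YR.labels))).filterMap id
  rwa [List.map_append, List.filterMap_append, List.map_congr_left hchildL,
    List.map_congr_left hchildR] at hperm

theorem IsBipartite.disjoint_olabels {𝒯 : Fin k → PTree α} {A AL AR : Fin k → Option (PTree α)}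
    (hbip : IsBipartite A AL AR) (hphylo : ∀ i, (𝒯 i).labelList.Nodup)
    (hA : ∀ i, IsCutSubtree (𝒯 i) (A i)) (i : Fin k) :
    Disjoint (olabels (AL i)) (olabels (AR i)) := by
  obtain ⟨s, sL, sR, hs, hsplit, hsL, hsR⟩ := hbip i
  rw [hsL, hsR]
  exact disjoint_olabels_connect_of_nodup ((hs ▸ hA i).nodup_flatMap_labelList (hphylo i))
    hsplit.perm

theorem IsBipartite.olabels_subset {A AL AR : Fin k → Option (PTree α)}
    (hbip : IsBipartite A AL AR) (i : Fin k) :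
    olabels (AL i) ⊆ olabels (A i) ∧ olabels (AR i) ⊆ olabels (A i) := by
  obtain ⟨s, sL, sR, hs, hsplit, hsL, hsR⟩ := hbip i
  rw [hs, hsL, hsR]
  exact olabels_connect_subset_of_perm_append hsplit.perm

theorem IsEmbeddedSupertree.disjoint_labels {𝒯 : Fin k → PTree α}
    {AL AR : Fin k → Option (PTree α)} {YL YR : PTree α}
    (hLR : ∀ i, Disjoint (olabels (AL i)) (olabels (AR i)))
    (hYL : IsEmbeddedSupertree 𝒯 AL YL) (hYR : IsEmbeddedSupertree 𝒯 AR YR) :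
    Disjoint YL.labels YR.labels := by
  refine Finset.disjoint_left.mpr fun x hxL hxR => ?_
  obtain ⟨i, -, hxi⟩ := Finset.mem_biUnion.mp (hYL.2.1 hxL)
  exact Finset.disjoint_left.mp (hLR i) (hYL.2.2.2 i (Finset.mem_inter.mpr ⟨hxL, hxi⟩))
    (hYR.2.2.2 i (Finset.mem_inter.mpr ⟨hxR, hxi⟩))

theorem IsEmbeddedSupertree.node_pair {𝒯 : Fin k → PTree α}
    {A AL AR : Fin k → Option (PTree α)} {YL YR : PTree α}
    (hphylo : ∀ i, (𝒯 i).labelList.Nodup) (hA : ∀ i, IsCutSubtree (𝒯 i) (A i))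
    (hbip : IsBipartite A AL AR)
    (hYL : IsEmbeddedSupertree 𝒯 AL YL) (hYR : IsEmbeddedSupertree 𝒯 AR YR) :
    IsEmbeddedSupertree 𝒯 A (node [YL, YR]) := by
  have hLR := hbip.disjoint_olabels hphylo hA
  have hdisj := hYL.disjoint_labels hLR hYR
  obtain ⟨hndL, hsubL, hcompatL, hcapL⟩ := hYL
  obtain ⟨hndR, hsubR, hcompatR, hcapR⟩ := hYR
  refine ⟨?_, ?_, fun i => ?_, fun i => ?_⟩
  · rw [labelList_node_pair]
    exact hndL.append hndR (List.disjoint_toFinset_iff_disjoint.mp hdisj)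
  · rw [labels_node_pair]
    exact Finset.union_subset hsubL hsubR
  · obtain ⟨s, sL, sR, hs, hsplit, hsL, hsR⟩ := hbip i
    exact orefines_restrict_node_pair hs hsL hsR hsplit.perm (hA i).olabels_subset (hLR i)
      (hcapL i) (hcapR i) (hcompatL i) (hcompatR i)
  · rw [labels_node_pair, Finset.union_inter_distrib_right]
    exact Finset.union_subset ((hcapL i).trans (hbip.olabels_subset i).1)
      ((hcapR i).trans (hbip.olabels_subset i).2)

theorem treeSize_node_pair {YL YR : PTree α} (h : Disjoint YL.labels YR.labels) :
    (node [YL, YR]).treeSize = YL.treeSize + YR.treeSize := by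
  rw [treeSize, labels_node_pair, Finset.card_union_of_disjoint h, treeSize, treeSize]

theorem labels_node_nil : labels (node ([] : List (PTree α))) = ∅ := by
  simp [labels, labelList_node]

theorem isEmbeddedSupertree_node_nil (𝒯 : Fin k → PTree α) (A : Fin k → Option (PTree α)) :
    IsEmbeddedSupertree 𝒯 A (node []) := by
  refine ⟨by simp [labelList_node], by simp [labels_node_nil], fun i => ?_,
    by simp [labels_node_nil]⟩
  rw [restrict_node, labels_node_nil]
  cases A i <;> simp [orestrict, restrict_empty, connect, ORefines]

theorem bddAbove_treeSize_isEmbeddedSupertree (𝒯 : Fin k → PTree α)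
    (A : Fin k → Option (PTree α)) :
    BddAbove {m : ℕ | ∃ Y : PTree α, IsEmbeddedSupertree 𝒯 A Y ∧ m = Y.treeSize} := by
  refine ⟨(allLabels 𝒯).card, ?_⟩
  rintro m ⟨Y, hY, rfl⟩
  exact Finset.card_le_card hY.2.1

theorem IsEmbeddedSupertree.treeSize_le_mcsp {𝒯 : Fin k → PTree α}
    {A : Fin k → Option (PTree α)} {Y : PTree α} (hY : IsEmbeddedSupertree 𝒯 A Y) :
    Y.treeSize ≤ mcsp 𝒯 A :=
  le_csSup (bddAbove_treeSize_isEmbeddedSupertree 𝒯 A) ⟨Y, hY, rfl⟩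

theorem exists_isEmbeddedSupertree_treeSize_eq_mcsp (𝒯 : Fin k → PTree α)
    (A : Fin k → Option (PTree α)) :
    ∃ Y : PTree α, IsEmbeddedSupertree 𝒯 A Y ∧ Y.treeSize = mcsp 𝒯 A := by
  have hne : {m : ℕ | ∃ Y : PTree α, IsEmbeddedSupertree 𝒯 A Y ∧ m = Y.treeSize}.Nonempty :=
    ⟨_, node [], isEmbeddedSupertree_node_nil 𝒯 A, rfl⟩
  obtain ⟨Y, hY, hsize⟩ := Nat.sSup_mem hne (bddAbove_treeSize_isEmbeddedSupertree 𝒯 A)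
  exact ⟨Y, hY, hsize.symm⟩

end

end PTree

/-- If `(𝒜_L, 𝒜_R)` is a bipartite of a cut-subforest `𝒜` of
`𝒯` then `mcsp(𝒜) ≥ mcsp(𝒜_L) + mcsp(𝒜_R)`. -/
theorem maximum_agreement_supertree_stmt3
    {α : Type} [DecidableEq α] {k : ℕ} (𝒯 : Fin k → PTree α)
    (hphylo : ∀ i, (𝒯 i).labelList.Nodup)
    (A AL AR : Fin k → Option (PTree α))
    (hA : PTree.IsCutSubforest 𝒯 A)
    (hbip : PTree.IsBipartite A AL AR) :
    PTree.mcsp 𝒯 AL + PTree.mcsp 𝒯 AR ≤ PTree.mcsp 𝒯 A := by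
  obtain ⟨YL, hYL, hsizeL⟩ := PTree.exists_isEmbeddedSupertree_treeSize_eq_mcsp 𝒯 AL
  obtain ⟨YR, hYR, hsizeR⟩ := PTree.exists_isEmbeddedSupertree_treeSize_eq_mcsp 𝒯 AR
  have hdisj := hYL.disjoint_labels (hbip.disjoint_olabels hphylo hA.1) hYR
  calc PTree.mcsp 𝒯 AL + PTree.mcsp 𝒯 AR = (PTree.node [YL, YR]).treeSize := by
        rw [← hsizeL, ← hsizeR, PTree.treeSize_node_pair hdisj]
    _ ≤ PTree.mcsp 𝒯 A := (hYL.node_pair hphylo hA.1 hbip hYR).treeSize_le_mcsp
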